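/- arXiv:1006.4449 — 2 statements merged into one kernel-verified Lean document; each statement's English description precedes it below -/
import Mathlib

section
/- Let m, n be positive integers and let F be a binary image contained in {1,…,m} × {1,…,n} with row sums r_1,…,r_m and column sums c_1,…,c_n. Define b_i = #{j ∈ {1,…,n} : c_j ≥ i} and d_i = b_i − r_i for i = 1,…,m, set d_0 = d_{m+1} = 0, and let L_h be the length of the horizontal boundary of F. Then for every integer t ≥ 0 and every choice of indices 0 ≤ i_1 < i_2 < ⋯ < i_{2t+1} ≤ m+1 one has L_h ≥ 2·r_1 − d_{i_{2t+1}} + d_{i_{2t}} − d_{i_{2t−1}} + ⋯ + d_{i_2} − 2·d_{i_1}. -/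
/-!
The inequality splits over the columns. A column with set of rows `S ⊆ {1, 2, …}` contributes
`#runEnds S + #runStarts S` to `L_h`, and `d i` is the sum over the columns of
`defect S i = [1 ≤ i ≤ #S] - [i ∈ S]`, the column pushed up to the rows `1, …, #S` minus the column.
For one column, an alternating sum `g a₁ - g a₂ + g a₃ - ⋯` along a monotone sequence is at most
`Φ a₀` whenever `Φ` is nonnegative, antitone, and dominates the descents of `g`; with `Φ` the total
descent of the defect, what is left is `2 [1 ∈ S] - 2 g a₀ + Φ a₀ ≤ #runEnds S + #runStarts S`.
This holds because a column containing row `1` that is not the interval `[1, #S]` has two runs, and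
a point of `S` above `#S` has a gap below it, hence a run start between the two.
-/

/-- The row sum `r i` of a binary image `F`: the number of points of `F` in row `i`. -/
def rowSum (F : Finset (ℤ × ℤ)) (i : ℤ) : ℕ := (F.filter fun p => p.1 = i).card

/-- The column sum `c j` of a binary image `F`: the number of points of `F` in column `j`. -/
def colSum (F : Finset (ℤ × ℤ)) (j : ℤ) : ℕ := (F.filter fun p => p.2 = j).card

/-- The length of the horizontal boundary of `F`: the number of pairs
`((i,j),(i',j'))` with `j = j'`, `|i - i'| = 1`, `(i,j) ∈ F` and `(i',j') ∉ F`. -/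
noncomputable def horizBoundaryLen (F : Finset (ℤ × ℤ)) : ℕ :=
  Set.ncard {q : (ℤ × ℤ) × (ℤ × ℤ) |
    q.1.2 = q.2.2 ∧ |q.1.1 - q.2.1| = 1 ∧ q.1 ∈ F ∧ q.2 ∉ F}

open Finset

theorem sum_alternating_le_of_antitone {α β : Type*} [Preorder α] [AddCommGroup β] [PartialOrder β]
    [IsOrderedAddMonoid β] {Φ G : α → β} (hΦ : Antitone Φ) (hΦG : Antitone (Φ - G))
    {t : ℕ} {a : ℕ → α} (ha : ∀ k < 2 * t, a k ≤ a (k + 1)) :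
    ∑ s ∈ range t, (G (a (2 * s + 1)) - G (a (2 * s + 2))) ≤ Φ (a 0) - Φ (a (2 * t)) := by
  rw [← sum_range_sub' (fun s => Φ (a (2 * s)))]
  refine sum_le_sum fun s hs => ?_
  have hs : s < t := mem_range.mp hs
  have h1 := hΦ (ha (2 * s) (by omega))
  have h2 := hΦG (ha (2 * s + 1) (by omega))
  simp only [Pi.sub_apply, sub_le_sub_iff] at h2
  calc G (a (2 * s + 1)) - G (a (2 * s + 2)) ≤ Φ (a (2 * s + 1)) - Φ (a (2 * s + 2)) := by
        rw [sub_le_sub_iff, add_comm]; exact h2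
    _ ≤ Φ (a (2 * s)) - Φ (a (2 * (s + 1))) := sub_le_sub_right h1 _

theorem Int.exists_step_of_le {P : ℤ → Prop} {x y : ℤ} (hx : P x) (hy : ¬ P y) (hxy : x ≤ y) :
    ∃ e, x ≤ e ∧ e < y ∧ P e ∧ ¬ P (e + 1) := by
  induction y, hxy using Int.leInduction with
  | base => exact absurd hx hy
  | succ y hxy ih =>
    by_cases hPy : P y
    · exact ⟨y, hxy, lt_add_one y, hPy, hy⟩
    · obtain ⟨e, h1, h2, h3, h4⟩ := ih hPy
      exact ⟨e, h1, h2.trans (lt_add_one y), h3, h4⟩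

def runEnds (S : Finset ℤ) : Finset ℤ := {i ∈ S | i + 1 ∉ S}

def runStarts (S : Finset ℤ) : Finset ℤ := {i ∈ S | i - 1 ∉ S}

section Column

variable {S : Finset ℤ}

theorem exists_mem_runEnds_between {x y : ℤ} (hx : x ∈ S) (hy : y ∉ S) (hxy : x ≤ y) :
    ∃ e ∈ runEnds S, x ≤ e ∧ e < y := by
  obtain ⟨e, hxe, hey, he, he'⟩ := Int.exists_step_of_le (P := (· ∈ S)) hx hy hxy
  exact ⟨e, mem_filter.mpr ⟨he, he'⟩, hxe, hey⟩

theorem exists_mem_runStarts_between {x y : ℤ} (hx : x ∉ S) (hy : y ∈ S) (hxy : x ≤ y) :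
    ∃ b ∈ runStarts S, x < b ∧ b ≤ y := by
  obtain ⟨e, hxe, hey, he, he'⟩ := Int.exists_step_of_le (P := (· ∉ S)) hx (not_not.mpr hy) hxy
  exact ⟨e + 1, mem_filter.mpr ⟨not_not.mp he', by simpa using he⟩, by omega, by omega⟩

theorem max'_mem_runEnds (h : S.Nonempty) : S.max' h ∈ runEnds S :=
  mem_filter.mpr ⟨S.max'_mem h, fun h' => (lt_add_one _).not_ge (S.le_max' _ h')⟩

theorem exists_notMem_of_card_lt {y : ℤ} (hy : y ∈ S) (hcy : #S < y) :
    ∃ z, 1 ≤ z ∧ z < y ∧ z ∉ S := by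
  by_contra! h
  have hsub : Icc 1 y ⊆ S := fun z hz => by
    obtain ⟨h1, h2⟩ := mem_Icc.mp hz
    rcases h2.lt_or_eq with h2 | rfl
    · exact h z h1 h2
    · exact hy
  have := card_le_card hsub
  rw [Int.card_Icc] at this
  omega

theorem two_le_card_runEnds_of_card_lt {y : ℤ} (h1 : 1 ∈ S) (hy : y ∈ S) (hcy : #S < y) :
    2 ≤ #(runEnds S) := by
  obtain ⟨z, hz1, hzy, hz⟩ := exists_notMem_of_card_lt hy hcy
  obtain ⟨e, he, -, hez⟩ := exists_mem_runEnds_between h1 hz hz1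
  have hmax := S.le_max' y hy
  refine one_lt_card.mpr ⟨e, he, S.max' ⟨y, hy⟩, max'_mem_runEnds _, by omega⟩

theorem exists_mem_runStarts_of_card_lt {y : ℤ} (hy : y ∈ S) (hcy : #S < y) :
    ∃ b ∈ runStarts S, 1 < b ∧ b ≤ y := by
  obtain ⟨z, hz1, hzy, hz⟩ := exists_notMem_of_card_lt hy hcy
  obtain ⟨b, hb, hzb, hby⟩ := exists_mem_runStarts_between hz hy hzy.le
  exact ⟨b, hb, by omega, hby⟩

theorem exists_card_lt_of_notMem_runEnds (hS : ∀ i ∈ S, 1 ≤ i) (hc : 1 ≤ #S)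
    (hE : (#S : ℤ) ∉ runEnds S) :
    ∃ y ∈ S, #S < y := by
  by_cases hcS : (#S : ℤ) ∈ S
  · exact ⟨#S + 1, by simpa [runEnds, hcS] using hE, lt_add_one _⟩
  · by_contra! h
    have hsub : S ⊆ (Icc 1 (#S : ℤ)).erase (#S : ℤ) := fun y hy =>
      mem_erase.mpr ⟨fun h' => hcS (h' ▸ hy), mem_Icc.mpr ⟨hS y hy, h y hy⟩⟩
    have := card_le_card hsub
    rw [card_erase_of_mem (mem_Icc.mpr ⟨by exact_mod_cast hc, le_rfl⟩), Int.card_Icc] at this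
    omega

def defect (S : Finset ℤ) (i : ℤ) : ℤ :=
  (if 1 ≤ i ∧ i ≤ #S then 1 else 0) - if i ∈ S then 1 else 0

/-- The total descent `∑_{i ≥ x} max (defect S i - defect S (i + 1)) 0`: one just before each run
start other than `1`, and one at `#S` unless a run ends there. -/
def defectDescent (S : Finset ℤ) (x : ℤ) : ℤ :=
  #{b ∈ runStarts S | x < b ∧ 1 < b} + if (#S : ℤ) ∉ runEnds S ∧ 1 ≤ (#S : ℤ) ∧ x ≤ #S then 1 else 0

theorem defectDescent_nonneg (x : ℤ) : 0 ≤ defectDescent S x := by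
  unfold defectDescent; positivity

theorem antitone_defectDescent : Antitone (defectDescent S) := by
  intro x y hxy
  have : #{b ∈ runStarts S | y < b ∧ 1 < b} ≤ #{b ∈ runStarts S | x < b ∧ 1 < b} :=
    card_le_card (monotone_filter_right _ fun b _ hb => ⟨hxy.trans_lt hb.1, hb.2⟩)
  unfold defectDescent
  by_cases hE : (#S : ℤ) ∈ runEnds S <;>
    simp only [hE, not_true_eq_false, not_false_eq_true, true_and, false_and, ↓reduceIte] <;>
    (try split_ifs) <;> omega

theorem defectDescent_eq_succ_add (x : ℤ) :
    defectDescent S x = defectDescent S (x + 1) + (if x + 1 ∈ runStarts S ∧ 1 < x + 1 then 1 else 0)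
      + if (#S : ℤ) ∉ runEnds S ∧ 1 ≤ (#S : ℤ) ∧ x = #S then 1 else 0 := by
  have h : ∀ b : ℤ, (if x < b ∧ 1 < b then 1 else 0 : ℕ) =
      (if x + 1 < b ∧ 1 < b then 1 else 0) + if b = x + 1 then (if 1 < b then 1 else 0) else 0 := by
    intro b; split_ifs <;> omega
  have hcard : (#{b ∈ runStarts S | x < b ∧ 1 < b} : ℤ) =
      #{b ∈ runStarts S | x + 1 < b ∧ 1 < b}
        + if x + 1 ∈ runStarts S ∧ 1 < x + 1 then 1 else 0 := by
    simp only [card_filter, h, sum_add_distrib, sum_ite_eq']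
    split_ifs <;> simp_all
  rw [defectDescent, defectDescent, hcard]
  by_cases hE : (#S : ℤ) ∈ runEnds S <;> by_cases hB : x + 1 ∈ runStarts S <;>
    simp only [hE, hB, not_true_eq_false, not_false_eq_true, true_and, false_and, ↓reduceIte] <;>
    (try split_ifs) <;> omega

theorem defect_sub_defect_add_one_le (hS : ∀ i ∈ S, 1 ≤ i) (x : ℤ) :
    defect S x - defect S (x + 1) ≤ (if x + 1 ∈ runStarts S ∧ 1 < x + 1 then 1 else 0)
      + if (#S : ℤ) ∉ runEnds S ∧ 1 ≤ (#S : ℤ) ∧ x = #S then 1 else 0 := by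
  have hx := hS x
  have hx1 := hS (x + 1)
  have hc : (x ∈ S ∨ x + 1 ∈ S) → 1 ≤ (#S : ℤ) := fun h => by
    exact_mod_cast card_pos.mpr (h.elim (⟨x, ·⟩) (⟨x + 1, ·⟩))
  simp only [defect, runStarts, runEnds, mem_filter, add_sub_cancel_right]
  generalize (#S : ℤ) = c at *
  rcases eq_or_ne x c with rfl | hxc
  all_goals
    by_cases h1 : x ∈ S <;> by_cases h2 : x + 1 ∈ S <;>
      simp only [h1, h2, not_true_eq_false, not_false_eq_true, true_and, and_true, false_and,
        and_false, ↓reduceIte, or_true, true_or, forall_const] at hx hx1 hc ⊢ <;>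
      (try split_ifs) <;> omega

theorem antitone_defectDescent_sub_defect (hS : ∀ i ∈ S, 1 ≤ i) :
    Antitone (defectDescent S - defect S) := by
  refine antitone_int_of_succ_le fun x => ?_
  have := defect_sub_defect_add_one_le hS x
  rw [Pi.sub_apply, Pi.sub_apply, defectDescent_eq_succ_add x]
  omega

theorem two_mul_sub_two_mul_defect_add_defectDescent_le (hS : ∀ i ∈ S, 1 ≤ i) (x : ℤ) :
    2 * (if 1 ∈ S then 1 else 0) - 2 * defect S x + defectDescent S x
      ≤ #(runEnds S) + #(runStarts S) := by
  set low := {b ∈ runStarts S | ¬(x < b ∧ 1 < b)}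
  have hsplit : #{b ∈ runStarts S | x < b ∧ 1 < b} + #low = #(runStarts S) :=
    card_filter_add_card_filter_not _
  have one_mem_low (h1 : 1 ∈ S) : 1 ∈ low := by
    have : (0 : ℤ) ∉ S := fun h => by simpa using hS 0 h
    simp [low, runStarts, h1, this]
  have one_le_card (h : S.Nonempty) : 1 ≤ (#S : ℤ) := by exact_mod_cast card_pos.mpr h
  have gap (hx : x ∈ S) (hcx : #S < x) :
      1 ≤ #low ∧ (1 ∈ S → 2 ≤ #low ∧ 2 ≤ #(runEnds S)) := by
    obtain ⟨b, hb, hb1, hbx⟩ := exists_mem_runStarts_of_card_lt hx hcx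
    have hb_low : b ∈ low := mem_filter.mpr ⟨hb, by omega⟩
    exact ⟨card_pos.mpr ⟨b, hb_low⟩, fun h1 =>
      ⟨one_lt_card.mpr ⟨1, one_mem_low h1, b, hb_low, by omega⟩,
        two_le_card_runEnds_of_card_lt h1 hx hcx⟩⟩
  have not_interval (h1 : 1 ∈ S) (hE : (#S : ℤ) ∉ runEnds S) : 2 ≤ #(runEnds S) := by
    obtain ⟨y, hy, hcy⟩ := exists_card_lt_of_notMem_runEnds hS (card_pos.mpr ⟨1, h1⟩) hE
    exact two_le_card_runEnds_of_card_lt h1 hy hcy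
  have one_mem (h1 : 1 ∈ S) : 1 ≤ #low ∧ 1 ≤ (#S : ℤ) :=
    ⟨card_pos.mpr ⟨1, one_mem_low h1⟩, one_le_card ⟨1, h1⟩⟩
  have x_mem (hx : x ∈ S) : 1 ≤ x ∧ 1 ≤ (#S : ℤ) := ⟨hS x hx, one_le_card ⟨x, hx⟩⟩
  have one_le_card_runEnds (h : 1 ≤ (#S : ℤ)) : 1 ≤ #(runEnds S) :=
    card_pos.mpr ⟨_, max'_mem_runEnds (card_pos.mp (by omega))⟩
  unfold defect defectDescent
  by_cases h1 : 1 ∈ S <;> by_cases hx : x ∈ S <;> by_cases hE : (#S : ℤ) ∈ runEnds S <;>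
    simp only [h1, hx, hE, ↓reduceIte, not_true_eq_false, not_false_eq_true, true_and, false_and,
      true_implies, false_implies, and_true] at one_mem x_mem gap not_interval ⊢ <;>
    split_ifs <;> omega

theorem alternating_defect_le_card_runEnds_add_card_runStarts (hS : ∀ i ∈ S, 1 ≤ i) {t : ℕ}
    {a : ℕ → ℤ} (ha : ∀ k < 2 * t, a k ≤ a (k + 1)) :
    2 * (if 1 ∈ S then 1 else 0)
        + ∑ s ∈ range t, (defect S (a (2 * s + 1)) - defect S (a (2 * s + 2)))
        - 2 * defect S (a 0)
      ≤ #(runEnds S) + #(runStarts S) := by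
  have := sum_alternating_le_of_antitone antitone_defectDescent
    (antitone_defectDescent_sub_defect hS) ha
  have := defectDescent_nonneg (S := S) (a (2 * t))
  have := two_mul_sub_two_mul_defect_add_defectDescent_le hS (a 0)
  linarith

end Column

def column (F : Finset (ℤ × ℤ)) (j : ℤ) : Finset ℤ := {i ∈ F.image Prod.fst | (i, j) ∈ F}

@[simp]
theorem mem_column {F : Finset (ℤ × ℤ)} {i j : ℤ} : i ∈ column F j ↔ (i, j) ∈ F := by
  simpa [column] using fun h => ⟨j, h⟩

theorem card_column (F : Finset (ℤ × ℤ)) (j : ℤ) : #(column F j) = colSum F j :=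
  card_nbij' (·, j) Prod.fst (fun i hi => by simpa using hi)
    (fun p hp => by obtain ⟨hp, rfl⟩ := mem_filter.mp hp; simpa using hp) (fun _ _ => rfl)
    (fun p hp => by obtain ⟨-, rfl⟩ := mem_filter.mp hp; rfl)

theorem sum_eq_sum_column {M : Type*} [AddCommMonoid M] {F : Finset (ℤ × ℤ)} {T : Finset ℤ}
    (hF : ∀ p ∈ F, p.2 ∈ T) (φ : ℤ × ℤ → M) :
    ∑ p ∈ F, φ p = ∑ j ∈ T, ∑ i ∈ column F j, φ (i, j) :=
  sum_finset_product_right F T (column F) fun p => by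
    simpa using fun hp => hF p hp

theorem rowSum_eq_sum_column {F : Finset (ℤ × ℤ)} {T : Finset ℤ} (hF : ∀ p ∈ F, p.2 ∈ T) (i : ℤ) :
    rowSum F i = ∑ j ∈ T, if i ∈ column F j then 1 else 0 := by
  rw [rowSum, card_filter, sum_eq_sum_column hF]
  simp only [sum_ite_eq']

theorem horizBoundaryLen_eq_sum (F : Finset (ℤ × ℤ)) :
    horizBoundaryLen F =
      ∑ p ∈ F, ((if (p.1 + 1, p.2) ∉ F then 1 else 0) + if (p.1 - 1, p.2) ∉ F then 1 else 0) := by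
  have hX : {q : (ℤ × ℤ) × (ℤ × ℤ) | q.1.2 = q.2.2 ∧ |q.1.1 - q.2.1| = 1 ∧ q.1 ∈ F ∧ q.2 ∉ F} =
      (fun x : (ℤ × ℤ) × ℤ => (x.1, (x.1.1 + x.2, x.1.2))) ''
        ↑{x ∈ F ×ˢ {1, -1} | (x.1.1 + x.2, x.1.2) ∉ F} := by
    ext ⟨⟨i, j⟩, ⟨i', j'⟩⟩
    simp only [Set.mem_ofPred_eq, Set.mem_image, coe_filter, mem_product, mem_insert,
      mem_singleton, Prod.exists, Prod.mk.injEq]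
    constructor
    · rintro ⟨rfl, habs, hp, hq⟩
      refine ⟨i, j, i' - i, ⟨⟨hp, ?_⟩, by simpa using hq⟩, ⟨rfl, rfl⟩, by ring, rfl⟩
      rcases abs_eq (zero_le_one' ℤ) |>.mp habs with h | h <;> omega
    · rintro ⟨i, j, δ, ⟨⟨hp, hδ⟩, hq⟩, ⟨rfl, rfl⟩, rfl, rfl⟩
      refine ⟨rfl, ?_, hp, hq⟩
      rcases hδ with rfl | rfl <;> norm_num
  have hinj : Function.Injective fun x : (ℤ × ℤ) × ℤ => (x.1, (x.1.1 + x.2, x.1.2)) := by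
    rintro ⟨p, δ⟩ ⟨p', δ'⟩ h
    simp only [Prod.mk.injEq] at h
    obtain ⟨rfl, h, -⟩ := h
    simp_all
  rw [horizBoundaryLen, hX, Set.ncard_image_of_injective _ hinj, Set.ncard_coe_finset, card_filter,
    sum_product]
  refine sum_congr rfl fun p _ => ?_
  rw [sum_pair (by norm_num), sub_eq_add_neg]

theorem horizBoundaryLen_eq_sum_column {F : Finset (ℤ × ℤ)} {T : Finset ℤ}
    (hF : ∀ p ∈ F, p.2 ∈ T) :
    horizBoundaryLen F = ∑ j ∈ T, (#(runEnds (column F j)) + #(runStarts (column F j))) := by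
  rw [horizBoundaryLen_eq_sum, sum_eq_sum_column hF]
  refine sum_congr rfl fun j _ => ?_
  simp only [runEnds, runStarts, card_filter, sum_add_distrib, mem_column]

theorem sum_defect_column {F : Finset (ℤ × ℤ)} {T : Finset ℤ} (hF : ∀ p ∈ F, p.2 ∈ T) (i : ℤ) :
    ∑ j ∈ T, defect (column F j) i = (#{j ∈ T | 1 ≤ i ∧ i ≤ colSum F j} : ℤ) - rowSum F i := by
  simp only [defect, card_column, sum_sub_distrib, rowSum_eq_sum_column hF, card_filter]
  push_cast
  rfl

theorem defect_eq_zero {S : Finset ℤ} {m i : ℤ} (hS : ∀ k ∈ S, 1 ≤ k ∧ k ≤ m) (hi : i ≤ 0 ∨ m < i) :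
    defect S i = 0 := by
  have hcard := card_le_card (fun k hk => mem_Icc.mpr (hS k hk) : S ⊆ Icc 1 m)
  rw [Int.card_Icc] at hcard
  have hiS : i ∉ S := fun h => by have := hS i h; omega
  simp only [defect, hiS, ↓reduceIte]
  split_ifs <;> omega

theorem eq_sum_defect_column {m n : ℤ} {F : Finset (ℤ × ℤ)}
    (hF : ∀ p ∈ F, p.1 ∈ Icc 1 m ∧ p.2 ∈ Icc 1 n) {b : ℤ → ℕ}
    (hb : ∀ i : ℤ, b i = #{j ∈ Icc 1 n | i ≤ (colSum F j : ℤ)}) {d : ℤ → ℤ}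
    (hd : ∀ i : ℤ, 1 ≤ i → i ≤ m → d i = (b i : ℤ) - (rowSum F i : ℤ))
    (hd0 : d 0 = 0) (hdm1 : d (m + 1) = 0) {i : ℤ} (hi : i ∈ Icc 0 (m + 1)) :
    d i = ∑ j ∈ Icc 1 n, defect (column F j) i := by
  have hrows (j : ℤ) : ∀ k ∈ column F j, 1 ≤ k ∧ k ≤ m := fun k hk =>
    mem_Icc.mp (hF _ (mem_column.mp hk)).1
  obtain ⟨h0, hm1⟩ := mem_Icc.mp hi
  rcases (by omega : i = 0 ∨ i = m + 1 ∨ 1 ≤ i ∧ i ≤ m) with rfl | rfl | ⟨h1, hm⟩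
  · rw [hd0, sum_eq_zero fun j _ => defect_eq_zero (hrows j) (by omega)]
  · rw [hdm1, sum_eq_zero fun j _ => defect_eq_zero (hrows j) (by omega)]
  · rw [hd _ h1 hm, hb, sum_defect_column fun p hp => (hF p hp).2]
    congr 3
    exact filter_congr fun j _ => by simp [h1]

/-- `idx 0 < idx 1 < ⋯ < idx (2t)` are the paper's `i_1 < i_2 < ⋯ < i_{2t+1}`, and the alternating
sum `- d_{i_{2t+1}} + d_{i_{2t}} - ⋯ + d_{i_2}` is written as
`∑_{s < t} (d (idx (2s+1)) - d (idx (2s+2)))`. -/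
theorem boundary_lower_bound_general_two_general (m n : ℕ)
    (F : Finset (ℤ × ℤ))
    (hF : ∀ p ∈ F, p.1 ∈ Finset.Icc (1 : ℤ) (m : ℤ) ∧ p.2 ∈ Finset.Icc (1 : ℤ) (n : ℤ))
    (b : ℤ → ℕ)
    (hb : ∀ i : ℤ, b i = ((Finset.Icc (1 : ℤ) (n : ℤ)).filter fun j => i ≤ (colSum F j : ℤ)).card)
    (d : ℤ → ℤ)
    (hd : ∀ i : ℤ, 1 ≤ i → i ≤ (m : ℤ) → d i = (b i : ℤ) - (rowSum F i : ℤ))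
    (hd0 : d 0 = 0) (hdm1 : d ((m : ℤ) + 1) = 0)
    (t : ℕ) (idx : ℕ → ℤ)
    (hidx_mono : ∀ a b : ℕ, a < b → b ≤ 2 * t → idx a < idx b)
    (hidx_range : ∀ s : ℕ, s ≤ 2 * t → idx s ∈ Finset.Icc (0 : ℤ) ((m : ℤ) + 1)) :
    (horizBoundaryLen F : ℤ) ≥
      2 * (rowSum F 1 : ℤ)
        + (∑ s ∈ Finset.range t, (d (idx (2 * s + 1)) - d (idx (2 * s + 2))))
        - 2 * d (idx 0) := by
  have hcols : ∀ p ∈ F, p.2 ∈ Icc 1 (n : ℤ) := fun p hp => (hF p hp).2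
  have hd_sum (k : ℕ) (hk : k ≤ 2 * t) :
      d (idx k) = ∑ j ∈ Icc 1 (n : ℤ), defect (column F j) (idx k) :=
    eq_sum_defect_column hF hb hd hd0 hdm1 (hidx_range k hk)
  rw [ge_iff_le, horizBoundaryLen_eq_sum_column hcols, rowSum_eq_sum_column hcols]
  calc _ = ∑ j ∈ Icc 1 (n : ℤ), (2 * (if 1 ∈ column F j then 1 else 0)
          + ∑ s ∈ range t, (defect (column F j) (idx (2 * s + 1))
            - defect (column F j) (idx (2 * s + 2)))
          - 2 * defect (column F j) (idx 0)) := by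
        have hsum : ∑ s ∈ range t, (d (idx (2 * s + 1)) - d (idx (2 * s + 2))) =
            ∑ s ∈ range t, ∑ j ∈ Icc 1 (n : ℤ), (defect (column F j) (idx (2 * s + 1))
              - defect (column F j) (idx (2 * s + 2))) := sum_congr rfl fun s hs => by
          rw [mem_range] at hs
          rw [hd_sum _ (by omega), hd_sum _ (by omega), sum_sub_distrib]
        rw [hsum, hd_sum 0 (Nat.zero_le _), sum_comm]
        push_cast
        simp only [mul_sum, sum_add_distrib, sum_sub_distrib]
    _ ≤ _ := sum_le_sum fun j _ => alternating_defect_le_card_runEnds_add_card_runStarts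
        (fun i hi => (mem_Icc.mp (hF _ (mem_column.mp hi)).1).1)
        fun k hk => (hidx_mono k (k + 1) (by omega) (by omega)).le
    _ = _ := by push_cast; rfl

/-- Corollary 1, inequality (4): the general lower bound
`L_h ≥ 2 r_1 - d_{i_{2t+1}} + d_{i_{2t}} - d_{i_{2t-1}} + ⋯ + d_{i_2} - 2 d_{i_1}`,
where `d_0 = d_{m+1} = 0` and indices are chosen from `{0, 1, …, m, m+1}`.
Here `idx 0, idx 1, …, idx (2t)` play the role of `i_1 < i_2 < ⋯ < i_{2t+1}`;
the alternating sum `- d_{i_{2t+1}} + d_{i_{2t}} - ⋯ + d_{i_2}` is written as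
`∑_{s < t} (d_{i_{2s+2}} - d_{i_{2s+3}})` (0-based: `d (idx (2s+1)) - d (idx (2s+2))`). -/
theorem boundary_lower_bound_general_two (m n : ℕ) (hm : 0 < m) (hn : 0 < n)
    (F : Finset (ℤ × ℤ))
    (hF : ∀ p ∈ F, p.1 ∈ Finset.Icc (1 : ℤ) (m : ℤ) ∧ p.2 ∈ Finset.Icc (1 : ℤ) (n : ℤ))
    (b : ℤ → ℕ)
    (hb : ∀ i : ℤ, b i = ((Finset.Icc (1 : ℤ) (n : ℤ)).filter fun j => i ≤ (colSum F j : ℤ)).card)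
    (d : ℤ → ℤ)
    (hd : ∀ i : ℤ, 1 ≤ i → i ≤ (m : ℤ) → d i = (b i : ℤ) - (rowSum F i : ℤ))
    (hd0 : d 0 = 0) (hdm1 : d ((m : ℤ) + 1) = 0)
    (t : ℕ) (idx : ℕ → ℤ)
    (hidx_mono : ∀ a b : ℕ, a < b → b ≤ 2 * t → idx a < idx b)
    (hidx_range : ∀ s : ℕ, s ≤ 2 * t → idx s ∈ Finset.Icc (0 : ℤ) ((m : ℤ) + 1)) :
    (horizBoundaryLen F : ℤ) ≥
      2 * (rowSum F 1 : ℤ)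
        + (∑ s ∈ Finset.range t, (d (idx (2 * s + 1)) - d (idx (2 * s + 2))))
        - 2 * d (idx 0) :=
  boundary_lower_bound_general_two_general m n F hF b hb d hd hd0 hdm1 t idx hidx_mono hidx_range
end

section
/- Let m, n be positive integers and let F be a binary image contained in {1,…,m} × {1,…,n} with row sums r_1,…,r_m and column sums c_1,…,c_n. Define b_i = #{j ∈ {1,…,n} : c_j ≥ i} and d_i = b_i − r_i for i = 1,…,m. Suppose k is an integer with 1 ≤ k ≤ m such that Σ_{i=1}^{k} d_i = 0. Then for every column j with c_j > k one has (i,j) ∈ F for all i with 1 ≤ i ≤ k, and for every column j with c_j ≤ k one has (i,j) ∉ F for all i with k+1 ≤ i ≤ m. -/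
/-!
Let `t_j` be the number of points of column `j` in rows `1, …, k`. Counting the points of `F`
in rows `1, …, k` by columns gives `Σ_{i ≤ k} r_i = Σ_j t_j`, and counting the pairs `(i, j)`
with `i ≤ k`, `i ≤ c_j` in two ways gives `Σ_{i ≤ k} b_i = Σ_j min(k, c_j)`. Since
`t_j ≤ min(k, c_j)` termwise, `Σ_{i ≤ k} d_i = 0` forces `t_j = min(k, c_j)` for every `j`:
a column with `c_j > k` contains all of rows `1, …, k`, and a column with `c_j ≤ k` has all
its points in rows `1, …, k`.
-/

open Finset

def colRows (F : Finset (ℤ × ℤ)) (j : ℤ) : Finset ℤ :=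
  (F.filter fun p => p.2 = j).image Prod.fst

section ColRows

variable {F : Finset (ℤ × ℤ)}

@[simp]
theorem mem_colRows {i j : ℤ} : i ∈ colRows F j ↔ (i, j) ∈ F := by
  simp [colRows]

theorem card_colRows (j : ℤ) : #(colRows F j) = colSum F j := by
  refine card_image_of_injOn fun p hp q hq hpq => Prod.ext hpq ?_
  simp only [mem_coe, mem_filter] at hp hq
  rw [hp.2, hq.2]

theorem rowSum_eq_card_filter {C : Finset ℤ} (hF : ∀ p ∈ F, p.2 ∈ C) (i : ℤ) :
    rowSum F i = #(C.filter fun j => (i, j) ∈ F) := by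
  refine card_nbij' Prod.snd (fun j => (i, j)) ?_ ?_ ?_ ?_
  · intro p hp
    simp only [mem_coe, mem_filter] at hp ⊢
    obtain ⟨hpF, rfl⟩ := hp
    exact ⟨hF p hpF, hpF⟩
  · intro j hj
    simp only [mem_coe, mem_filter] at hj ⊢
    exact ⟨hj.2, trivial⟩
  · intro p hp
    simp only [mem_coe, mem_filter] at hp
    rw [← hp.2]
  · intro j _
    rfl

theorem sum_rowSum_eq_sum_card_inter_colRows {C : Finset ℤ} (hF : ∀ p ∈ F, p.2 ∈ C)
    (R : Finset ℤ) : ∑ i ∈ R, rowSum F i = ∑ j ∈ C, #(R ∩ colRows F j) := by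
  simp_rw [rowSum_eq_card_filter hF, ← filter_mem_eq_inter, mem_colRows]
  exact sum_card_bipartiteAbove_eq_sum_card_bipartiteBelow (fun i j => (i, j) ∈ F)

theorem card_Icc_filter_le (k c : ℤ) :
    #((Icc 1 k).filter (· ≤ c)) = (min k c).toNat := by
  have : (Icc 1 k).filter (· ≤ c) = Icc 1 (min k c) := by
    ext i
    simp only [mem_filter, mem_Icc, le_min_iff]
    tauto
  rw [this, Int.card_Icc, add_sub_cancel_right]

theorem card_Icc_inter_colRows_le (k j : ℤ) :
    #(Icc 1 k ∩ colRows F j) ≤ #((Icc 1 k).filter (· ≤ (colSum F j : ℤ))) := by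
  have hk : #(Icc 1 k ∩ colRows F j) ≤ #(Icc 1 k) := card_le_card inter_subset_left
  have hc : #(Icc 1 k ∩ colRows F j) ≤ #(colRows F j) := card_le_card inter_subset_right
  rw [Int.card_Icc, add_sub_cancel_right] at hk
  rw [card_colRows] at hc
  rw [card_Icc_filter_le]
  omega

theorem card_Icc_inter_colRows_eq_of_sum_eq {C : Finset ℤ} (hF : ∀ p ∈ F, p.2 ∈ C) {k : ℤ}
    (h : ∑ i ∈ Icc 1 k, #(C.filter fun j => i ≤ (colSum F j : ℤ)) =
      ∑ i ∈ Icc 1 k, rowSum F i) :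
    ∀ j ∈ C, #(Icc 1 k ∩ colRows F j) = #((Icc 1 k).filter (· ≤ (colSum F j : ℤ))) := by
  have hcount := sum_card_bipartiteAbove_eq_sum_card_bipartiteBelow (s := Icc 1 k) (t := C)
    (fun i j => i ≤ (colSum F j : ℤ))
  simp only [bipartiteAbove, bipartiteBelow] at hcount
  rw [hcount, sum_rowSum_eq_sum_card_inter_colRows hF] at h
  exact (sum_eq_sum_iff_of_le fun j _ => card_Icc_inter_colRows_le k j).mp h.symm

variable {j k : ℤ}

theorem Icc_subset_colRows_of_lt
    (h : #(Icc 1 k ∩ colRows F j) = #((Icc 1 k).filter (· ≤ (colSum F j : ℤ))))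
    (hk : k < colSum F j) : Icc 1 k ⊆ colRows F j := by
  rw [filter_true_of_mem fun i hi => (mem_Icc.mp hi).2.trans hk.le] at h
  exact inter_eq_left.mp (eq_of_subset_of_card_le inter_subset_left h.ge)

theorem colRows_subset_Icc_of_le
    (h : #(Icc 1 k ∩ colRows F j) = #((Icc 1 k).filter (· ≤ (colSum F j : ℤ))))
    (hk : colSum F j ≤ k) : colRows F j ⊆ Icc 1 k := by
  rw [card_Icc_filter_le, min_eq_right hk, Int.toNat_natCast, ← card_colRows] at h
  exact inter_eq_right.mp (eq_of_subset_of_card_le inter_subset_right h.ge)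

end ColRows

theorem sigma_zero_structure_general (m n : ℕ)
    (F : Finset (ℤ × ℤ))
    (hF : ∀ p ∈ F, p.1 ∈ Finset.Icc (1 : ℤ) (m : ℤ) ∧ p.2 ∈ Finset.Icc (1 : ℤ) (n : ℤ))
    (b : ℤ → ℕ)
    (hb : ∀ i : ℤ, b i = ((Finset.Icc (1 : ℤ) (n : ℤ)).filter fun j => i ≤ (colSum F j : ℤ)).card)
    (d : ℤ → ℤ) (hd : ∀ i : ℤ, d i = (b i : ℤ) - (rowSum F i : ℤ))
    (k : ℤ)
    (hσ : ∑ i ∈ Finset.Icc (1 : ℤ) k, d i = 0) :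
    (∀ j : ℤ, 1 ≤ j → j ≤ (n : ℤ) → k < (colSum F j : ℤ) →
      ∀ i : ℤ, 1 ≤ i → i ≤ k → (i, j) ∈ F) ∧
    (∀ j : ℤ, 1 ≤ j → j ≤ (n : ℤ) → (colSum F j : ℤ) ≤ k →
      ∀ i : ℤ, k + 1 ≤ i → i ≤ (m : ℤ) → (i, j) ∉ F) := by
  have hsum : ∑ i ∈ Icc 1 k, b i = ∑ i ∈ Icc 1 k, rowSum F i := by
    simp only [hd, sum_sub_distrib, sub_eq_zero] at hσ
    exact_mod_cast hσ
  simp only [hb] at hsum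
  have heq := card_Icc_inter_colRows_eq_of_sum_eq (fun p hp => (hF p hp).2) hsum
  refine ⟨fun j hj1 hj2 hc i hi1 hi2 => ?_, fun j hj1 hj2 hc i hi _ hiF => ?_⟩
  · rw [← mem_colRows]
    exact Icc_subset_colRows_of_lt (heq j (mem_Icc.mpr ⟨hj1, hj2⟩)) hc (mem_Icc.mpr ⟨hi1, hi2⟩)
  · have := colRows_subset_Icc_of_le (heq j (mem_Icc.mpr ⟨hj1, hj2⟩)) hc (mem_colRows.mpr hiF)
    rw [mem_Icc] at this
    omega

/-- If `Σ_{i=1}^k d_i = 0`, then every column `j` with `c_j > k` is full in rows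
`1, …, k`, and every column `j` with `c_j ≤ k` is empty in rows `k+1, …, m`. -/
theorem sigma_zero_structure (m n : ℕ) (hm : 0 < m) (hn : 0 < n)
    (F : Finset (ℤ × ℤ))
    (hF : ∀ p ∈ F, p.1 ∈ Finset.Icc (1 : ℤ) (m : ℤ) ∧ p.2 ∈ Finset.Icc (1 : ℤ) (n : ℤ))
    (b : ℤ → ℕ)
    (hb : ∀ i : ℤ, b i = ((Finset.Icc (1 : ℤ) (n : ℤ)).filter fun j => i ≤ (colSum F j : ℤ)).card)
    (d : ℤ → ℤ) (hd : ∀ i : ℤ, d i = (b i : ℤ) - (rowSum F i : ℤ))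
    (k : ℤ) (hk1 : 1 ≤ k) (hkm : k ≤ (m : ℤ))
    (hσ : ∑ i ∈ Finset.Icc (1 : ℤ) k, d i = 0) :
    (∀ j : ℤ, 1 ≤ j → j ≤ (n : ℤ) → k < (colSum F j : ℤ) →
      ∀ i : ℤ, 1 ≤ i → i ≤ k → (i, j) ∈ F) ∧
    (∀ j : ℤ, 1 ≤ j → j ≤ (n : ℤ) → (colSum F j : ℤ) ≤ k →
      ∀ i : ℤ, k + 1 ≤ i → i ≤ (m : ℤ) → (i, j) ∉ F) :=
  sigma_zero_structure_general m n F hF b hb d hd k hσ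
end
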